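/- Let (L, A) be a rational structure on a group G and H ≤ G a subgroup. If H is L-quasiconvex, then H is L-rational: the language L ∩ π^{-1}(H) is regular. -/

import Mathlib

def evalWord {A G : Type} [Group G] (a : A → G) (w : List A) : G :=
  (w.map a).prod

def IsRegularLang {A : Type} (L : Language A) : Prop :=
  ∃ (σ : Type) (_ : Fintype σ) (M : DFA A σ), M.accepts = L

/-!
By the Myhill–Nerode theorem it suffices to see that `R = L ∩ π⁻¹(H)` has finitely many left
quotients. The left quotient of `R` by `x` is the left quotient of `L` by `x` intersected with
`{y | π(x) π(y) ∈ H}`, and the latter only depends on the coset `H π(x)`. If the quotient is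
nonempty, `x` is a prefix of a word of `R`, so quasiconvexity gives a word `u` of length at most
`K` with `π(x) π(u) ∈ H`, i.e. `H π(x) = H π(u)⁻¹`: only finitely many cosets occur.
-/

section

variable {A G : Type} [Group G] (a : A → G)

theorem evalWord_append (u v : List A) :
    evalWord a (u ++ v) = evalWord a u * evalWord a v := by
  simp [evalWord]

def wordsInCoset (H : Subgroup G) (g : G) : Language A :=
  {y | g * evalWord a y ∈ H}

theorem wordsInCoset_eq_of_mul_mem {H : Subgroup G} {g s : G} (h : g * s ∈ H) :
    wordsInCoset a H g = wordsInCoset a H s⁻¹ := by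
  ext y
  have hy : g * evalWord a y = (g * s) * (s⁻¹ * evalWord a y) := by group
  change g * evalWord a y ∈ H ↔ s⁻¹ * evalWord a y ∈ H
  rw [hy, H.mul_mem_cancel_left h]

theorem leftQuotient_setOf_mem_and_evalWord_mem (L : Language A) (H : Subgroup G) (x : List A) :
    Language.leftQuotient {w | w ∈ L ∧ evalWord a w ∈ H} x =
      L.leftQuotient x ⊓ wordsInCoset a H (evalWord a x) := by
  ext y
  change x ++ y ∈ L ∧ evalWord a (x ++ y) ∈ H ↔ x ++ y ∈ L ∧ evalWord a x * evalWord a y ∈ H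
  rw [evalWord_append]

variable {a} in
theorem Language.IsRegular.setOf_mem_and_evalWord_mem {L : Language A} (hL : L.IsRegular)
    {H : Subgroup G} {S : Set G} (hS : S.Finite)
    (hprefix : ∀ x y, x ++ y ∈ L → evalWord a (x ++ y) ∈ H → ∃ s ∈ S, evalWord a x * s ∈ H) :
    Language.IsRegular {w | w ∈ L ∧ evalWord a w ∈ H} := by
  apply Language.IsRegular.of_finite_range_leftQuotient
  refine ((hL.finite_range_leftQuotient.image2 (· ⊓ ·)
    (hS.image fun s => wordsInCoset a H s⁻¹)).insert 0).subset ?_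
  rintro _ ⟨x, rfl⟩
  rcases Set.eq_empty_or_nonempty
      (Language.leftQuotient {w | w ∈ L ∧ evalWord a w ∈ H} x : Set (List A)) with
    hempty | ⟨y, hyL, hyH⟩
  · exact Or.inl hempty
  obtain ⟨s, hs, hxs⟩ := hprefix x y hyL hyH
  refine Or.inr ⟨_, ⟨x, rfl⟩, _, ⟨s, hs, rfl⟩, ?_⟩
  rw [leftQuotient_setOf_mem_and_evalWord_mem, wordsInCoset_eq_of_mul_mem a hxs]

end

theorem rational_of_quasiconvex_general
    {A G : Type} [Fintype A] [Group G] (a : A → G)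
    (L : Language A) (hreg : IsRegularLang L)
    (H : Subgroup G)
    (hqc : ∃ K : ℕ, 0 < K ∧ ∀ w ∈ L, evalWord a w ∈ H → ∀ p : List A, p <+: w →
      ∃ u : List A, u.length ≤ K ∧ evalWord a (p ++ u) ∈ H) :
    IsRegularLang {w | w ∈ L ∧ evalWord a w ∈ H} := by
  obtain ⟨K, -, hK⟩ := hqc
  refine Language.IsRegular.setOf_mem_and_evalWord_mem hreg
    ((List.finite_length_le A K).image (evalWord a)) fun x y hxy hH => ?_
  obtain ⟨u, hu, hxu⟩ := hK _ hxy hH x (List.prefix_append x y)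
  exact ⟨evalWord a u, ⟨u, hu, rfl⟩, by rwa [← evalWord_append]⟩

/-- An `L`-quasiconvex subgroup is `L`-rational. -/
theorem rational_of_quasiconvex
    {A G : Type} [Fintype A] [Group G] (a : A → G)
    (hinv : ∀ x : A, ∃ y : A, a y = (a x)⁻¹)
    (L : Language A) (hreg : IsRegularLang L)
    (hsur : ∀ g : G, ∃ w ∈ L, evalWord a w = g)
    (H : Subgroup G)
    (hqc : ∃ K : ℕ, 0 < K ∧ ∀ w ∈ L, evalWord a w ∈ H → ∀ p : List A, p <+: w →
      ∃ u : List A, u.length ≤ K ∧ evalWord a (p ++ u) ∈ H) :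
    IsRegularLang {w | w ∈ L ∧ evalWord a w ∈ H} :=
  rational_of_quasiconvex_general a L hreg H hqc
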